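/- Riemann-sum approximation of the action along a piecewise-C¹ curve: let L be continuous and γ : [0,t] → ℝ^d be continuous and piecewise C¹ with m pieces, with γ(t) = x. For K ∈ ℕ set h = t/K, t_k = hk, and y_K = (γ(t_0), …, γ(t_{K-1})) ∈ (ℝ^d)^K. Then the discrete action L_w^K(y_K) = Σ_{k=0}^{K-1} L(γ(t_k), t_k, (γ(t_{k+1}) − γ(t_k))/h) h + w(γ(0)) converges to L_w(γ) = ∫₀ᵗ L(γ(s),s,γ'(s)) ds + w(γ(0)) as K → ∞. -/

import Mathlib

/-!
The discrete action is the integral over `[0, t]` of the step function equal on each grid cell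
`[t_k, t_{k+1})` to `L(γ(t_k), t_k, (γ(t_{k+1}) - γ(t_k))/h)`. Off the finitely many breakpoints
`γ` is strictly differentiable, so difference quotients over the shrinking cells containing `s`
tend to `γ'(s)`, and the step functions converge a.e. to the integrand of the action. By the
fundamental theorem of calculus off a finite set, all difference quotients are bounded by
`sup |γ'|`, so the step functions only take values of `L` on a fixed compact set, and dominated
convergence applies.
-/

open MeasureTheory intervalIntegral

/-- `γ : ℝ → ℝ^d` is continuous and piecewise `C¹` on `[0,t]`. -/
def IsPiecewiseC1 (d : ℕ) (t : ℝ) (γ : ℝ → EuclideanSpace ℝ (Fin d)) : Prop :=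
  Continuous γ ∧ ∃ (m : ℕ) (τ : ℕ → ℝ), 0 < m ∧ τ 0 = 0 ∧ τ m = t ∧
    (∀ l < m, τ l < τ (l + 1)) ∧
    ∀ l < m, ContDiffOn ℝ 1 γ (Set.Icc (τ l) (τ (l + 1)))

open Set Filter Topology
open scoped Interval

section Grid

noncomputable def gridFloor (h s : ℝ) : ℝ := h * ⌊s / h⌋₊

theorem measurable_comp_gridFloor (φ : ℝ → ℝ) (h : ℝ) :
    Measurable fun s => φ (gridFloor h s) :=
  (measurable_from_nat (f := fun n : ℕ => φ (h * n))).comp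
    (Nat.measurable_floor.comp (measurable_id.div_const h))

variable {h : ℝ}

theorem gridFloor_nonneg (s : ℝ) (hh : 0 < h) : 0 ≤ gridFloor h s :=
  mul_nonneg hh.le (Nat.cast_nonneg _)

theorem gridFloor_le {s : ℝ} (hh : 0 < h) (hs : 0 ≤ s) : gridFloor h s ≤ s := by
  have := Nat.floor_le (div_nonneg hs hh.le)
  rwa [le_div_iff₀' hh] at this

theorem lt_gridFloor_add (s : ℝ) (hh : 0 < h) : s < gridFloor h s + h := by
  have := Nat.lt_floor_add_one (s / h)
  rwa [div_lt_iff₀' hh, mul_add_one] at this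

theorem Icc_gridFloor_subset {s : ℝ} {K : ℕ} (hh : 0 < h) (hs : s ∈ Ico 0 (h * K)) :
    Icc (gridFloor h s) (gridFloor h s + h) ⊆ Icc 0 (h * K) := by
  have hlt : ⌊s / h⌋₊ < K :=
    (Nat.floor_lt (div_nonneg hs.1 hh.le)).mpr (by rw [div_lt_iff₀' hh]; exact hs.2)
  have hcast : (⌊s / h⌋₊ : ℝ) + 1 ≤ K := by exact_mod_cast hlt
  refine Icc_subset_Icc (gridFloor_nonneg s hh) ?_
  rw [gridFloor, ← mul_add_one]
  gcongr

theorem tendsto_gridFloor {ι : Type*} {l : Filter ι} {h : ι → ℝ} (hh : Tendsto h l (𝓝[>] 0))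
    {s : ℝ} (hs : 0 ≤ s) : Tendsto (fun i => gridFloor (h i) s) l (𝓝 s) := by
  have hpos : ∀ᶠ i in l, 0 < h i := hh.eventually self_mem_nhdsWithin
  have hlow : Tendsto (fun i => s - h i) l (𝓝 s) := by
    simpa using tendsto_const_nhds.sub (tendsto_nhds_of_tendsto_nhdsWithin hh)
  refine tendsto_of_tendsto_of_tendsto_of_le_of_le' hlow tendsto_const_nhds ?_ ?_
  · filter_upwards [hpos] with i hi
    linarith [lt_gridFloor_add s hi]
  · filter_upwards [hpos] with i hi
    exact gridFloor_le hi hs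

theorem integral_comp_gridFloor {F : Type*} [NormedAddCommGroup F] [NormedSpace ℝ F]
    [CompleteSpace F] (f : ℝ → F) (hh : 0 < h) (K : ℕ) :
    ∫ s in (0 : ℝ)..h * K, f (gridFloor h s) = ∑ k ∈ Finset.range K, h • f (h * k) := by
  have hcell : ∀ k : ℕ, EqOn (fun _ => f (h * k)) (fun s => f (gridFloor h s))
      (Ioo (h * k) (h * (k + 1 : ℕ))) := by
    intro k s hs
    have hfloor : ⌊s / h⌋₊ = k := by
      rw [Nat.floor_eq_iff (div_nonneg (by nlinarith [hs.1, k.cast_nonneg (α := ℝ)]) hh.le),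
        le_div_iff₀ hh, div_lt_iff₀ hh]
      push_cast at hs
      constructor <;> linarith [hs.1, hs.2]
    simp only [gridFloor, hfloor]
  have hle : ∀ k : ℕ, h * k ≤ h * (k + 1 : ℕ) := fun k => by gcongr; omega
  have hint : ∀ k < K, IntervalIntegrable (fun s => f (gridFloor h s)) volume
      (h * k) (h * (k + 1 : ℕ)) := fun k _ =>
    intervalIntegrable_const.congr_uIoo (uIoo_of_le (hle k) ▸ hcell k)
  have h0 : (0 : ℝ) = h * (0 : ℕ) := by simp
  rw [h0, ← sum_integral_adjacent_intervals hint]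
  refine Finset.sum_congr rfl fun k _ => ?_
  rw [← integral_congr_Ioo_of_le (hle k) (hcell k), intervalIntegral.integral_const]
  push_cast
  ring_nf

end Grid

variable {E : Type*} [NormedAddCommGroup E] [NormedSpace ℝ E]

theorem HasStrictDerivAt.tendsto_slope_of_tendsto {ι : Type*} {l : Filter ι} {f : ℝ → E}
    {f' : E} {x : ℝ} (hf : HasStrictDerivAt f f' x) {a b : ι → ℝ}
    (ha : Tendsto a l (𝓝 x)) (hb : Tendsto b l (𝓝 x)) (hab : ∀ᶠ i in l, a i ≠ b i) :
    Tendsto (fun i => slope f (a i) (b i)) l (𝓝 f') := by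
  have hlo := (hasStrictFDerivAt_iff_isLittleO.mp hf.hasStrictFDerivAt).comp_tendsto
    (hb.prodMk_nhds ha)
  have := hlo.tendsto_inv_smul_nhds_zero.add_const f'
  rw [zero_add] at this
  refine this.congr' (hab.mono fun i hi => ?_)
  have : b i - a i ≠ 0 := sub_ne_zero.mpr hi.symm
  simp [slope_def_module, smul_sub, smul_smul, inv_mul_cancel₀ this]

theorem norm_sub_le_of_norm_deriv_le_off_countable [CompleteSpace E] {f : ℝ → E} {a b C : ℝ}
    {T : Set ℝ} (hab : a ≤ b) (hT : T.Countable) (hc : ContinuousOn f (Icc a b))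
    (hd : ∀ x ∈ Ioo a b \ T, HasDerivAt f (deriv f x) x)
    (hC : ∀ x ∈ Ioo a b \ T, ‖deriv f x‖ ≤ C) :
    ‖f b - f a‖ ≤ C * (b - a) := by
  have hbound : ∀ᵐ x, x ∈ Ι a b → ‖deriv f x‖ ≤ C := by
    filter_upwards [measure_eq_zero_iff_ae_notMem.mp (hT.measure_zero volume),
      Measure.ae_ne volume b] with x hxT hxb hx
    rw [uIoc_of_le hab] at hx
    exact hC x ⟨⟨hx.1, lt_of_le_of_ne hx.2 hxb⟩, hxT⟩
  have hi : IntervalIntegrable (deriv f) volume a b :=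
    intervalIntegrable_const.mono_fun' (stronglyMeasurable_deriv f).aestronglyMeasurable
      ((ae_restrict_iff' measurableSet_uIoc).mpr hbound)
  rw [← integral_eq_of_hasDerivAt_off_countable_of_le f (deriv f) hab hT hc hd hi]
  simpa [abs_of_nonneg (sub_nonneg.2 hab)] using norm_integral_le_of_norm_le_const_ae hbound

theorem norm_slope_le_of_norm_deriv_le_off_countable [CompleteSpace E] {f : ℝ → E}
    {a b c d C : ℝ} {T : Set ℝ} (hT : T.Countable) (hc : ContinuousOn f (Icc a b))
    (hd : ∀ x ∈ Ioo a b \ T, HasDerivAt f (deriv f x) x)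
    (hC : ∀ x ∈ Ioo a b \ T, ‖deriv f x‖ ≤ C) (hcd : Icc c d ⊆ Icc a b) (hlt : c < d) :
    ‖slope f c d‖ ≤ C := by
  have hcd' := (Icc_subset_Icc_iff hlt.le).mp hcd
  have hsub : Ioo c d \ T ⊆ Ioo a b \ T :=
    sdiff_subset_sdiff_left (Ioo_subset_Ioo hcd'.1 hcd'.2)
  have := norm_sub_le_of_norm_deriv_le_off_countable hlt.le hT (hc.mono hcd)
    (fun x hx => hd x (hsub hx)) (fun x hx => hC x (hsub hx))
  rw [slope_def_module, norm_smul, norm_inv, Real.norm_eq_abs, abs_of_pos (sub_pos.2 hlt)]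
  rwa [inv_mul_le_iff₀ (sub_pos.2 hlt), mul_comm]

theorem HasStrictDerivAt.tendsto_slope_gridFloor {ι : Type*} {l : Filter ι} {f : ℝ → E}
    {f' : E} {s : ℝ} (hf : HasStrictDerivAt f f' s) (hs : 0 ≤ s) {h : ι → ℝ}
    (hh : Tendsto h l (𝓝[>] 0)) :
    Tendsto (fun i => slope f (gridFloor (h i) s) (gridFloor (h i) s + h i)) l (𝓝 f') := by
  have ha := tendsto_gridFloor hh hs
  have hb : Tendsto (fun i => gridFloor (h i) s + h i) l (𝓝 s) := by
    simpa using ha.add (tendsto_nhds_of_tendsto_nhdsWithin hh)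
  exact hf.tendsto_slope_of_tendsto ha hb
    ((hh.eventually self_mem_nhdsWithin).mono fun i hi => (lt_add_of_pos_right _ hi).ne)

noncomputable def discreteAction (L : E → ℝ → E → ℝ) (γ : ℝ → E) (t : ℝ) (K : ℕ) : ℝ :=
  ∑ k ∈ Finset.range K, L (γ (t / K * k)) (t / K * k)
    ((t / K)⁻¹ • (γ (t / K * (k + 1)) - γ (t / K * k))) * (t / K)

theorem discreteAction_eq_integral (L : E → ℝ → E → ℝ) (γ : ℝ → E) {t : ℝ} (ht : 0 < t)
    {K : ℕ} (hK : K ≠ 0) :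
    discreteAction L γ t K = ∫ s in (0 : ℝ)..t,
      L (γ (gridFloor (t / K) s)) (gridFloor (t / K) s)
        (slope γ (gridFloor (t / K) s) (gridFloor (t / K) s + t / K)) := by
  have htK : t = t / K * K := (div_mul_cancel₀ t (Nat.cast_ne_zero.mpr hK)).symm
  have hh : 0 < t / K := div_pos ht (Nat.cast_pos.mpr (Nat.pos_of_ne_zero hK))
  unfold discreteAction
  set h := t / K
  rw [htK, integral_comp_gridFloor (fun a => L (γ a) a (slope γ a (a + h))) hh]
  refine Finset.sum_congr rfl fun k _ => ?_
  rw [slope_def_module, add_sub_cancel_left, mul_add_one, smul_eq_mul, mul_comm]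

theorem tendsto_discreteAction [ProperSpace E] {L : E → ℝ → E → ℝ}
    (hL : Continuous fun q : E × ℝ × E => L q.1 q.2.1 q.2.2) {γ : ℝ → E} {t R : ℝ}
    {T : Set ℝ} (ht : 0 < t) (hγ : ContinuousOn γ (Icc 0 t)) (hT : T.Countable)
    (hd : ∀ s ∈ Ioo 0 t \ T, HasStrictDerivAt γ (deriv γ s) s)
    (hR : ∀ s ∈ Ioo 0 t \ T, ‖deriv γ s‖ ≤ R) :
    Tendsto (discreteAction L γ t) atTop (𝓝 (∫ s in (0 : ℝ)..t, L (γ s) s (deriv γ s))) := by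
  obtain ⟨M, hM⟩ := ((isCompact_Icc.image_of_continuousOn hγ).prod
    ((isCompact_Icc (a := (0 : ℝ)) (b := t)).prod
      (isCompact_closedBall (0 : E) R))).exists_bound_of_continuousOn hL.continuousOn
  have hstep : Tendsto (fun K : ℕ => t / K) atTop (𝓝[>] 0) :=
    tendsto_nhdsWithin_iff.mpr ⟨tendsto_const_div_atTop_nhds_zero_nat t,
      (eventually_gt_atTop 0).mono fun K hK => div_pos ht (Nat.cast_pos.mpr hK)⟩
  refine (tendsto_integral_filter_of_dominated_convergence (fun _ => M)
    (F := fun (K : ℕ) s => L (γ (gridFloor (t / K) s)) (gridFloor (t / K) s)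
      (slope γ (gridFloor (t / K) s) (gridFloor (t / K) s + t / K))) ?_ ?_
    intervalIntegrable_const ?_).congr' ?_
  · exact Eventually.of_forall fun K => (measurable_comp_gridFloor
      (fun a => L (γ a) a (slope γ a (a + t / K))) (t / K)).aestronglyMeasurable
  · filter_upwards [eventually_gt_atTop 0] with K hK
    filter_upwards [Measure.ae_ne volume t] with s hst hs
    rw [uIoc_of_le ht.le] at hs
    have hh : 0 < t / K := div_pos ht (Nat.cast_pos.mpr hK)
    have htK : t / K * K = t := div_mul_cancel₀ t (Nat.cast_ne_zero.mpr hK.ne')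
    have hcell := Icc_gridFloor_subset (K := K) hh
      ⟨hs.1.le, htK.symm ▸ lt_of_le_of_ne hs.2 hst⟩
    rw [htK] at hcell
    set a := gridFloor (t / K) s
    have ha : a ∈ Icc 0 t := hcell (left_mem_Icc.mpr (by linarith))
    exact hM (γ a, a, slope γ a (a + t / K)) ⟨mem_image_of_mem γ ha, ha,
      mem_closedBall_zero_iff.mpr (norm_slope_le_of_norm_deriv_le_off_countable hT hγ
        (fun x hx => (hd x hx).hasDerivAt) hR hcell (lt_add_of_pos_right a hh))⟩
  · filter_upwards [measure_eq_zero_iff_ae_notMem.mp (hT.measure_zero volume),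
      Measure.ae_ne volume t] with s hsT hst hs
    rw [uIoc_of_le ht.le] at hs
    have hs' : s ∈ Ioo 0 t \ T := ⟨⟨hs.1, lt_of_le_of_ne hs.2 hst⟩, hsT⟩
    have ha := tendsto_gridFloor hstep hs.1.le
    have hv := (hd s hs').tendsto_slope_gridFloor hs.1.le hstep
    exact (hL.tendsto (γ s, s, deriv γ s)).comp
      (((hd s hs').hasDerivAt.continuousAt.tendsto.comp ha).prodMk_nhds (ha.prodMk_nhds hv))
  · filter_upwards [eventually_ne_atTop 0] with K hK
    exact (discreteAction_eq_integral L γ ht hK).symm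

theorem IsPiecewiseC1.exists_finite_hasStrictDerivAt {d : ℕ} {t : ℝ}
    {γ : ℝ → EuclideanSpace ℝ (Fin d)} (hγ : IsPiecewiseC1 d t γ) :
    ∃ T : Set ℝ, T.Finite ∧ ∃ R, ∀ s ∈ Ioo 0 t \ T,
      HasStrictDerivAt γ (deriv γ s) s ∧ ‖deriv γ s‖ ≤ R := by
  obtain ⟨-, m, τ, -, hτ0, hτm, hτlt, hC1⟩ := hγ
  obtain ⟨R, hR⟩ := ((finite_Iio m).isCompact_biUnion fun l hl =>
    isCompact_Icc.image_of_continuousOn ((hC1 l hl).continuousOn_derivWithin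
      (uniqueDiffOn_Icc (hτlt l hl)) le_rfl)).isBounded.exists_norm_le
  refine ⟨τ '' Iic m, (finite_Iic m).image τ, R, fun s hs => ?_⟩
  obtain ⟨l, hτl, hl, hlτ⟩ : ∃ l, τ l ≤ s ∧ l < m ∧ s < τ (l + 1) := by
    simpa using Ico_subset_biUnion_Ico m τ (hτ0 ▸ hτm ▸ Ioo_subset_Ico_self hs.1)
  have hsl : s ∈ Ioo (τ l) (τ (l + 1)) :=
    ⟨lt_of_le_of_ne hτl fun h => hs.2 ⟨l, mem_Iic.mpr hl.le, h⟩, hlτ⟩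
  have hnhds : Icc (τ l) (τ (l + 1)) ∈ 𝓝 s := Icc_mem_nhds hsl.1 hsl.2
  refine ⟨((hC1 l hl).contDiffAt hnhds).hasStrictDerivAt one_ne_zero, hR _ ?_⟩
  exact mem_biUnion (mem_Iio.mpr hl) ⟨s, Ioo_subset_Icc_self hsl, derivWithin_of_mem_nhds hnhds⟩

theorem discrete_action_converges_to_action_general (d : ℕ) (t : ℝ) (ht : 0 < t)
    (L : EuclideanSpace ℝ (Fin d) → ℝ → EuclideanSpace ℝ (Fin d) → ℝ)
    (hLcont : Continuous fun q : EuclideanSpace ℝ (Fin d) × ℝ × EuclideanSpace ℝ (Fin d) =>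
      L q.1 q.2.1 q.2.2)
    (w : EuclideanSpace ℝ (Fin d) → ℝ)
    (γ : ℝ → EuclideanSpace ℝ (Fin d)) (hγ : IsPiecewiseC1 d t γ) :
    Filter.Tendsto
      (fun K : ℕ => (∑ k ∈ Finset.range K,
          L (γ ((t / K) * k)) ((t / K) * k)
            ((t / K)⁻¹ • (γ ((t / K) * (k + 1)) - γ ((t / K) * k))) * (t / K))
        + w (γ 0))
      Filter.atTop
      (nhds ((∫ s in (0 : ℝ)..t, L (γ s) s (deriv γ s)) + w (γ 0))) := by
  obtain ⟨T, hT, R, hTR⟩ := hγ.exists_finite_hasStrictDerivAt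
  exact (tendsto_discreteAction hLcont ht hγ.1.continuousOn hT.countable
    (fun s hs => (hTR s hs).1) (fun s hs => (hTR s hs).2)).add_const (w (γ 0))

/-- Riemann-sum approximation of the action along a continuous piecewise-`C¹`
curve: with `h = t/K`, `t_k = h k` and sample points `y_k = γ(t_k)`, the
discrete action `∑_{k<K} L(γ(t_k), t_k, (γ(t_{k+1}) − γ(t_k))/h) h + w(γ 0)`
converges to `∫₀ᵗ L(γ(s), s, γ'(s)) ds + w(γ 0)` as `K → ∞`. -/
theorem discrete_action_converges_to_action (d : ℕ) (t : ℝ) (ht : 0 < t)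
    (L : EuclideanSpace ℝ (Fin d) → ℝ → EuclideanSpace ℝ (Fin d) → ℝ)
    (hLcont : Continuous fun q : EuclideanSpace ℝ (Fin d) × ℝ × EuclideanSpace ℝ (Fin d) =>
      L q.1 q.2.1 q.2.2)
    (w : EuclideanSpace ℝ (Fin d) → ℝ)
    (x : EuclideanSpace ℝ (Fin d))
    (γ : ℝ → EuclideanSpace ℝ (Fin d)) (hγ : IsPiecewiseC1 d t γ) (hγt : γ t = x) :
    Filter.Tendsto
      (fun K : ℕ => (∑ k ∈ Finset.range K,
          L (γ ((t / K) * k)) ((t / K) * k)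
            ((t / K)⁻¹ • (γ ((t / K) * (k + 1)) - γ ((t / K) * k))) * (t / K))
        + w (γ 0))
      Filter.atTop
      (nhds ((∫ s in (0 : ℝ)..t, L (γ s) s (deriv γ s)) + w (γ 0))) :=
  discrete_action_converges_to_action_general d t ht L hLcont w γ hγ
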